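/- arXiv:1809.07107 — 3 statements merged into one kernel-verified Lean document; each statement's English description precedes it below -/
import Mathlib

section
/- Let T > 0, u ∈ L¹([0,T];ℝ) and ψ₀ ∈ 𝒳, and let Φᵘ(·)ψ₀ denote the unique mild solution on [0,T] of the bilinear control system with initial value ψ₀ and control u. Then for every t ∈ [0,T] the Dyson expansion holds: Φᵘ(t)ψ₀ = Σ_{j=0}^∞ Z^j_t ψ₀, the series converging in 𝒳. -/
open MeasureTheory Set

variable {X : Type*} [NormedAddCommGroup X] [NormedSpace ℝ X] [CompleteSpace X]

/-- `ψ` is a mild solution on `[0, T]` of `ψ' = Aψ + u(t)Bψ + K(ψ)`, `ψ(0) = ψ₀`,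
where `A` generates the semigroup `S`. -/
def IsMildSolution (S : ℝ → X →L[ℝ] X) (B : X →L[ℝ] X) (K : X → X)
    (u : ℝ → ℝ) (ψ₀ : X) (T : ℝ) (ψ : ℝ → X) : Prop :=
  ∀ t ∈ Icc (0:ℝ) T,
    ψ t = S t ψ₀ + (∫ s in (0:ℝ)..t, u s • S (t - s) (B (ψ s)))
        + (∫ s in (0:ℝ)..t, S (t - s) (K (ψ s)))

/-!
Truncated outside `[0, T]`, the semigroup becomes a strongly continuous family bounded by
`C = M e^{ωT}`, so the Duhamel integral `t ↦ ∫₀ᵗ S(t - s) g(s) ds` of an `L¹` forcing `g` is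
continuous in `t` and bounded by `C ∫₀ᵗ ‖g‖`. With `L(s) = C (‖B‖ |u(s)| + k)` and `Λ(t) = ∫₀ᵗ L`,
the errors `eₚ = ‖Yᵖ - Φ‖` of the Picard iterates thus satisfy `eₚ₊₁(t) ≤ ∫₀ᵗ L eₚ`. As `Λ` is
absolutely continuous, `∫₀ᵗ L Λᵖ = Λ(t)ᵖ⁺¹ / (p + 1)`, so by induction `eₚ(t) ≤ c Λ(t)ᵖ / p!` with
`c = sup ‖Φ‖`. These bounds are summable, so the telescoping series `∑ (Yʲ⁺¹ - Yʲ)` converges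
absolutely, and its sum is `lim Yᵖ = Φ`.
-/

open Filter Topology
open scoped NNReal

theorem integral_mul_pow_primitive {L : ℝ → ℝ} {t : ℝ} (hL : IntervalIntegrable L volume 0 t)
    (n : ℕ) :
    ∫ s in (0:ℝ)..t, L s * (∫ r in (0:ℝ)..s, L r) ^ n =
      (∫ r in (0:ℝ)..t, L r) ^ (n + 1) / (n + 1) := by
  set Λ : ℝ → ℝ := fun x => ∫ r in (0:ℝ)..x, L r
  have hΛ : AbsolutelyContinuousOnInterval Λ 0 t :=
    hL.absolutelyContinuousOnInterval_intervalIntegral left_mem_uIcc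
  have hpow : ∀ m : ℕ, AbsolutelyContinuousOnInterval (fun x => Λ x ^ (m + 1)) 0 t := by
    intro m
    induction m with
    | zero => simpa using hΛ
    | succ m ih => simpa only [pow_succ] using ih.fun_mul hΛ
  have hderiv : ∀ᵐ x, x ∈ uIoc 0 t →
      deriv (fun x => Λ x ^ (n + 1)) x = (n + 1) * (L x * Λ x ^ n) := by
    filter_upwards [hL.ae_hasDerivAt_integral] with x hx hxt
    rw [((hx (uIoc_subset_uIcc hxt) 0 left_mem_uIcc).fun_pow (n + 1)).deriv]
    push_cast
    ring
  have hFTC := (hpow n).integral_deriv_eq_sub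
  rw [intervalIntegral.integral_congr_ae hderiv, intervalIntegral.integral_const_mul] at hFTC
  have hΛ0 : Λ 0 = 0 := intervalIntegral.integral_same
  rw [hΛ0, zero_pow n.succ_ne_zero, sub_zero] at hFTC
  show ∫ s in (0:ℝ)..t, L s * Λ s ^ n = Λ t ^ (n + 1) / (n + 1)
  rw [← hFTC]
  field_simp

theorem le_mul_pow_div_factorial_of_le_integral {L : ℝ → ℝ} {e : ℕ → ℝ → ℝ} {T c : ℝ}
    (hL : IntegrableOn L (Icc 0 T)) (hL0 : ∀ s, 0 ≤ L s) (he : ∀ p s, 0 ≤ e p s)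
    (h0 : ∀ t ∈ Icc 0 T, e 0 t ≤ c)
    (hstep : ∀ p, ∀ t ∈ Icc 0 T, e (p + 1) t ≤ ∫ s in (0:ℝ)..t, L s * e p s) (p : ℕ) :
    ∀ t ∈ Icc 0 T, e p t ≤ c * (∫ s in (0:ℝ)..t, L s) ^ p / p.factorial := by
  induction p with
  | zero => simpa using h0
  | succ p ih =>
    intro t ht
    have hsub : Ioc 0 t ⊆ Icc 0 T := fun s hs => ⟨hs.1.le, hs.2.trans ht.2⟩
    have hT : 0 ≤ T := ht.1.trans ht.2
    have hΛ : ContinuousOn (fun s => ∫ r in (0:ℝ)..s, L r) (Icc 0 T) := by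
      simpa only [uIcc_of_le hT] using
        intervalIntegral.continuousOn_primitive_interval (a := 0) (b := T) (by rwa [uIcc_of_le hT])
    have hLt : IntervalIntegrable L volume 0 t :=
      (intervalIntegrable_iff_integrableOn_Ioc_of_le ht.1).2 (hL.mono_set hsub)
    calc e (p + 1) t ≤ ∫ s in (0:ℝ)..t, L s * e p s := hstep p t ht
      _ ≤ ∫ s in (0:ℝ)..t, L s * (c * (∫ r in (0:ℝ)..s, L r) ^ p / p.factorial) := by
        simp only [intervalIntegral.integral_of_le ht.1]
        refine integral_mono_of_nonneg (.of_forall fun s => mul_nonneg (hL0 s) (he p s)) ?_ ?_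
        · exact (hL.mul_continuousOn (by fun_prop) isCompact_Icc).mono_set hsub
        · exact (ae_restrict_mem measurableSet_Ioc).mono fun s hs =>
            mul_le_mul_of_nonneg_left (ih s (hsub hs)) (hL0 s)
      _ = c / p.factorial * ∫ s in (0:ℝ)..t, L s * (∫ r in (0:ℝ)..s, L r) ^ p := by
        rw [← intervalIntegral.integral_const_mul]
        congr 1 with s
        ring
      _ = c * (∫ s in (0:ℝ)..t, L s) ^ (p + 1) / (p + 1).factorial := by
        rw [integral_mul_pow_primitive hLt, Nat.factorial_succ]
        push_cast
        field_simp

section Telescoping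

variable {E : Type*} [NormedAddCommGroup E] [CompleteSpace E]

theorem hasSum_sub_of_norm_sub_le {f : ℕ → E} {l : E} {b : ℕ → ℝ} (hb : Summable b)
    (hf : ∀ n, ‖f n - l‖ ≤ b n) : HasSum (fun n => f (n + 1) - f n) (l - f 0) := by
  have hlim : Tendsto f atTop (𝓝 l) := tendsto_iff_norm_sub_tendsto_zero.2
    (squeeze_zero (fun n => norm_nonneg _) hf hb.tendsto_atTop_zero)
  have hsum : Summable fun n => f (n + 1) - f n := by
    refine ((summable_nat_add_iff 1).2 hb |>.add hb).of_norm_bounded fun n => ?_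
    calc ‖f (n + 1) - f n‖ ≤ ‖f (n + 1) - l‖ + ‖l - f n‖ := norm_sub_le_norm_sub_add_norm_sub ..
      _ ≤ b (n + 1) + b n := by rw [norm_sub_rev l]; exact add_le_add (hf _) (hf _)
  rw [hsum.hasSum_iff_tendsto_nat]
  simp_rw [Finset.sum_range_sub]
  exact hlim.sub_const _

end Telescoping

section Duhamel

variable {E : Type*} [NormedAddCommGroup E] [NormedSpace ℝ E] {S : ℝ → E →L[ℝ] E} {C : ℝ≥0}

noncomputable def duhamel (S : ℝ → E →L[ℝ] E) (g : ℝ → E) (t : ℝ) : E :=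
  ∫ s in (0:ℝ)..t, S (t - s) (g s)

theorem continuous_uncurry_apply_of_norm_le (hS : ∀ x, Continuous fun t => S t x)
    (hC : ∀ t, ‖S t‖ ≤ C) : Continuous fun q : ℝ × E => S q.1 q.2 :=
  continuous_prod_of_continuous_lipschitzWith' _ C
    (fun t => (S t).lipschitz.weaken (by exact_mod_cast hC t)) hS

theorem aestronglyMeasurable_apply_sub (hS : ∀ x, Continuous fun t => S t x)
    (hC : ∀ t, ‖S t‖ ≤ C) {μ : Measure ℝ} {g : ℝ → E} (hg : AEStronglyMeasurable g μ) (t : ℝ) :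
    AEStronglyMeasurable (fun s => S (t - s) (g s)) μ :=
  (continuous_uncurry_apply_of_norm_le hS hC).comp_aestronglyMeasurable
    ((continuous_const.sub continuous_id).aestronglyMeasurable.prodMk hg)

theorem IntervalIntegrable.apply_sub (hS : ∀ x, Continuous fun t => S t x)
    (hC : ∀ t, ‖S t‖ ≤ C) {g : ℝ → E} {a b : ℝ} (hg : IntervalIntegrable g volume a b) (t : ℝ) :
    IntervalIntegrable (fun s => S (t - s) (g s)) volume a b :=
  (hg.norm.const_mul C).mono_fun'
    (aestronglyMeasurable_apply_sub hS hC hg.aestronglyMeasurable_restrict_uIoc t)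
    (.of_forall fun s => (S (t - s)).le_of_opNorm_le (hC _) _)

theorem duhamel_add (hS : ∀ x, Continuous fun t => S t x) (hC : ∀ t, ‖S t‖ ≤ C)
    {g h : ℝ → E} {t : ℝ} (hg : IntervalIntegrable g volume 0 t)
    (hh : IntervalIntegrable h volume 0 t) :
    duhamel S (fun s => g s + h s) t = duhamel S g t + duhamel S h t := by
  simp only [duhamel, map_add]
  exact intervalIntegral.integral_add (hg.apply_sub hS hC t) (hh.apply_sub hS hC t)

theorem duhamel_sub (hS : ∀ x, Continuous fun t => S t x) (hC : ∀ t, ‖S t‖ ≤ C)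
    {g h : ℝ → E} {t : ℝ} (hg : IntervalIntegrable g volume 0 t)
    (hh : IntervalIntegrable h volume 0 t) :
    duhamel S (fun s => g s - h s) t = duhamel S g t - duhamel S h t := by
  simp only [duhamel, map_sub]
  exact intervalIntegral.integral_sub (hg.apply_sub hS hC t) (hh.apply_sub hS hC t)

theorem norm_duhamel_le (hC : ∀ t, ‖S t‖ ≤ C) {g : ℝ → E} {b : ℝ → ℝ} {t : ℝ} (ht : 0 ≤ t)
    (hgb : ∀ s ∈ Ioc 0 t, ‖g s‖ ≤ b s) (hb : IntervalIntegrable b volume 0 t) :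
    ‖duhamel S g t‖ ≤ C * ∫ s in (0:ℝ)..t, b s := by
  rw [← intervalIntegral.integral_const_mul]
  refine intervalIntegral.norm_integral_le_of_norm_le ht (.of_forall fun s hs => ?_)
    (hb.const_mul C)
  exact (S (t - s)).le_of_opNorm_le (hC _) _ |>.trans
    (mul_le_mul_of_nonneg_left (hgb s hs) C.coe_nonneg)

theorem continuousOn_duhamel (hS : ∀ x, Continuous fun t => S t x) (hC : ∀ t, ‖S t‖ ≤ C)
    {g : ℝ → E} {T : ℝ} (hg : IntegrableOn g (Icc 0 T)) :
    ContinuousOn (duhamel S g) (Icc 0 T) := by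
  intro t₀ ht₀
  have hgi : ∀ a ∈ Icc 0 T, ∀ b ∈ Icc 0 T, IntervalIntegrable g volume a b :=
    fun a ha b hb => (hg.mono_set (uIcc_subset_Icc ha hb)).intervalIntegrable
  have h0 : (0:ℝ) ∈ Icc 0 T := ⟨le_rfl, ht₀.1.trans ht₀.2⟩
  have hsplit : ∀ t ∈ Icc 0 T, duhamel S g t =
      (∫ s in (0:ℝ)..t₀, S (t - s) (g s)) + ∫ s in t₀..t, S (t - s) (g s) := fun t ht =>
    (intervalIntegral.integral_add_adjacent_intervals
      ((hgi 0 h0 t₀ ht₀).apply_sub hS hC t) ((hgi t₀ ht₀ t ht).apply_sub hS hC t)).symm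
  have hhead : Continuous fun t => ∫ s in (0:ℝ)..t₀, S (t - s) (g s) :=
    intervalIntegral.continuous_of_dominated_interval
      (fun t => aestronglyMeasurable_apply_sub hS hC
        (hgi 0 h0 t₀ ht₀).aestronglyMeasurable_restrict_uIoc t)
      (fun t => .of_forall fun s _ => (S (t - s)).le_of_opNorm_le (hC _) _)
      ((hgi 0 h0 t₀ ht₀).norm.const_mul C)
      (.of_forall fun s _ => (hS (g s)).comp (continuous_id.sub continuous_const))
  have htail : Tendsto (fun t => ∫ s in t₀..t, S (t - s) (g s)) (𝓝[Icc 0 T] t₀) (𝓝 0) := by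
    have hprim : ContinuousWithinAt (fun t => ∫ s in t₀..t, ‖g s‖) (Icc 0 T) t₀ := by
      have := intervalIntegral.continuousOn_primitive_interval' (a := t₀)
        (hgi 0 h0 T ⟨h0.2, le_rfl⟩).norm (by rwa [uIcc_of_le h0.2])
      rw [uIcc_of_le h0.2] at this
      exact this t₀ ht₀
    have hlim := ((hprim.const_mul (C : ℝ)).abs).tendsto
    simp only [intervalIntegral.integral_same, mul_zero, abs_zero] at hlim
    refine squeeze_zero_norm' ?_ hlim
    filter_upwards [self_mem_nhdsWithin] with t ht
    rw [← intervalIntegral.integral_const_mul]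
    exact intervalIntegral.norm_integral_le_abs_of_norm_le
      (.of_forall fun s => (S (t - s)).le_of_opNorm_le (hC _) _)
      ((hgi t₀ ht₀ t ht).norm.const_mul C)
  have := ((hhead.tendsto t₀).mono_left nhdsWithin_le_nhds).add htail
  rw [add_zero] at this
  rw [ContinuousWithinAt, hsplit t₀ ht₀, intervalIntegral.integral_same, add_zero]
  exact this.congr' (eventually_nhdsWithin_of_forall fun t ht => (hsplit t ht).symm)

theorem exists_bounded_continuous_extension {T : ℝ} (hT : 0 ≤ T)
    (hS : ∀ x, ContinuousOn (fun t => S t x) (Icc 0 T)) (hC : ∀ t ∈ Icc 0 T, ‖S t‖ ≤ C) :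
    ∃ S' : ℝ → E →L[ℝ] E,
      (∀ x, Continuous fun t => S' t x) ∧ (∀ t, ‖S' t‖ ≤ C) ∧ EqOn S' S (Icc 0 T) :=
  ⟨fun t => S (projIcc 0 T hT t),
    fun x => (hS x).comp_continuous (continuous_subtype_val.comp continuous_projIcc)
      fun t => (projIcc 0 T hT t).2,
    fun t => hC _ (projIcc 0 T hT t).2,
    fun t ht => by simp only [projIcc_of_mem hT ht]⟩

theorem duhamel_eq_of_eqOn {S' : ℝ → E →L[ℝ] E} {g : ℝ → E} {t : ℝ} (ht : 0 ≤ t)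
    (h : EqOn S S' (Icc 0 t)) : duhamel S g t = duhamel S' g t := by
  refine intervalIntegral.integral_congr fun s hs => ?_
  rw [uIcc_of_le ht] at hs
  simp only [h ⟨sub_nonneg.2 hs.2, by linarith [hs.1]⟩]

end Duhamel

section BilinearSystem

variable {E : Type*} [NormedAddCommGroup E] [NormedSpace ℝ E] {S : ℝ → E →L[ℝ] E} {C : ℝ≥0}
  {u : ℝ → ℝ} {B : E →L[ℝ] E} {K : E → E} {k : ℝ≥0} {T : ℝ}

def forcing (u : ℝ → ℝ) (B : E →L[ℝ] E) (K : E → E) (ψ : ℝ → E) (s : ℝ) : E :=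
  u s • B (ψ s) + K (ψ s)

theorem norm_forcing_sub_le (hK : LipschitzWith k K) (ψ φ : ℝ → E) (s : ℝ) :
    ‖forcing u B K ψ s - forcing u B K φ s‖ ≤ (‖B‖ * |u s| + k) * ‖ψ s - φ s‖ := by
  have hB : ‖u s • B (ψ s - φ s)‖ ≤ ‖B‖ * |u s| * ‖ψ s - φ s‖ := by
    rw [norm_smul, Real.norm_eq_abs, mul_comm ‖B‖, mul_assoc]
    exact mul_le_mul_of_nonneg_left (B.le_opNorm _) (abs_nonneg _)
  calc ‖forcing u B K ψ s - forcing u B K φ s‖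
      = ‖u s • B (ψ s - φ s) + (K (ψ s) - K (φ s))‖ := by
        rw [map_sub, smul_sub, forcing, forcing, add_sub_add_comm]
    _ ≤ ‖B‖ * |u s| * ‖ψ s - φ s‖ + k * ‖ψ s - φ s‖ :=
        (norm_add_le _ _).trans (add_le_add hB (hK.norm_sub_le _ _))
    _ = (‖B‖ * |u s| + k) * ‖ψ s - φ s‖ := by ring

theorem integrableOn_forcing (hu : IntegrableOn u (Icc 0 T)) (hK : Continuous K) {ψ : ℝ → E}
    (hψ : ContinuousOn ψ (Icc 0 T)) : IntegrableOn (forcing u B K ψ) (Icc 0 T) :=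
  (hu.smul_continuousOn (B.continuous.comp_continuousOn hψ) isCompact_Icc).add
    (hK.comp_continuousOn hψ).integrableOn_Icc

theorem norm_duhamel_forcing_sub_le (hS : ∀ x, Continuous fun t => S t x) (hC : ∀ t, ‖S t‖ ≤ C)
    (hu : IntegrableOn u (Icc 0 T)) (hK : LipschitzWith k K) {ψ φ : ℝ → E}
    (hψ : ContinuousOn ψ (Icc 0 T)) (hφ : ContinuousOn φ (Icc 0 T)) {t : ℝ} (ht : t ∈ Icc 0 T) :
    ‖duhamel S (forcing u B K ψ) t - duhamel S (forcing u B K φ) t‖ ≤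
      ∫ s in (0:ℝ)..t, C * (‖B‖ * |u s| + k) * ‖ψ s - φ s‖ := by
  have hsub : uIcc 0 t ⊆ Icc 0 T := uIcc_subset_Icc ⟨le_rfl, ht.1.trans ht.2⟩ ht
  have hF : ∀ {χ : ℝ → E}, ContinuousOn χ (Icc 0 T) →
      IntervalIntegrable (forcing u B K χ) volume 0 t := fun hχ =>
    ((integrableOn_forcing hu hK.continuous hχ).mono_set hsub).intervalIntegrable
  have hw : IntegrableOn (fun s => ‖B‖ * |u s| + k) (Icc 0 T) :=
    (hu.abs.const_mul ‖B‖).add (integrableOn_const measure_Icc_lt_top.ne)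
  rw [← duhamel_sub hS hC (hF hψ) (hF hφ)]
  simp_rw [mul_assoc, intervalIntegral.integral_const_mul]
  refine norm_duhamel_le hC ht.1 (fun s _ => norm_forcing_sub_le hK ψ φ s) ?_
  exact ((hw.mul_continuousOn (hψ.sub hφ).norm isCompact_Icc).mono_set hsub).intervalIntegrable

theorem IsMildSolution.eq_add_duhamel [CompleteSpace E] {S' : ℝ → E →L[ℝ] E} {ψ₀ : E}
    {Φ : ℝ → E} (hΦ : IsMildSolution S B K u ψ₀ T Φ) (hΦc : ContinuousOn Φ (Icc 0 T))
    (hS' : ∀ x, Continuous fun t => S' t x) (hC : ∀ t, ‖S' t‖ ≤ C) (hS'S : EqOn S' S (Icc 0 T))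
    (hu : IntegrableOn u (Icc 0 T)) (hK : Continuous K) {t : ℝ} (ht : t ∈ Icc 0 T) :
    Φ t = S t ψ₀ + duhamel S' (forcing u B K Φ) t := by
  have hsub : uIcc 0 t ⊆ Icc 0 T := uIcc_subset_Icc ⟨le_rfl, ht.1.trans ht.2⟩ ht
  have hB : IntervalIntegrable (fun s => u s • B (Φ s)) volume 0 t :=
    ((hu.smul_continuousOn (B.continuous.comp_continuousOn hΦc) isCompact_Icc).mono_set
      hsub).intervalIntegrable
  have hKΦ : IntervalIntegrable (fun s => K (Φ s)) volume 0 t :=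
    ((hK.comp_continuousOn hΦc).integrableOn_Icc.mono_set hsub).intervalIntegrable
  have hS'S₀ := hS'S.mono (Icc_subset_Icc_right ht.2)
  unfold forcing
  rw [hΦ t ht, add_assoc, duhamel_add hS' hC hB hKΦ, duhamel_eq_of_eqOn ht.1 hS'S₀,
    duhamel_eq_of_eqOn ht.1 hS'S₀]
  simp only [duhamel, map_smul]

end BilinearSystem

theorem dyson_expansion_of_mildSolution_general
    (S : ℝ → X →L[ℝ] X)
    (hScont : ∀ x : X, ContinuousOn (fun t => S t x) (Ici (0:ℝ)))
    (M ω : ℝ) (hM : 0 < M) (hω : 0 ≤ ω)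
    (hSbound : ∀ t : ℝ, 0 ≤ t → ‖S t‖ ≤ M * Real.exp (ω * t))
    (B : X →L[ℝ] X) (K : X → X) (k : NNReal) (hK : LipschitzWith k K)
    (T : ℝ) (hT : 0 < T)
    (u : ℝ → ℝ) (hu : IntegrableOn u (Icc (0:ℝ) T))
    (ψ₀ : X)
    -- `Φ` is the unique (continuous) mild solution with initial value `ψ₀` and control `u`
    (Φ : ℝ → X)
    (hΦcont : ContinuousOn Φ (Icc (0:ℝ) T))
    (hΦ : IsMildSolution S B K u ψ₀ T Φ)
    -- the Picard/Dyson iterates `Y p t = Y^p_t ψ₀`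
    (Y : ℕ → ℝ → X)
    (hY0 : ∀ t : ℝ, Y 0 t = 0)
    (hYrec : ∀ p : ℕ, ∀ t : ℝ, 0 ≤ t →
      Y (p + 1) t = S t ψ₀ + ∫ s in (0:ℝ)..t,
        (u s • S (t - s) (B (Y p s)) + S (t - s) (K (Y p s)))) :
    ∀ t ∈ Icc (0:ℝ) T, HasSum (fun j : ℕ => Y (j + 1) t - Y j t) (Φ t) := by
  set C : ℝ≥0 := (M * Real.exp (ω * T)).toNNReal
  obtain ⟨S', hS'c, hS'C, hS'S⟩ := exists_bounded_continuous_extension (C := C) hT.le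
    (fun x => (hScont x).mono Icc_subset_Ici_self) fun t ht =>
      (hSbound t ht.1).trans <| (show M * Real.exp (ω * t) ≤ M * Real.exp (ω * T) by
        gcongr; exact ht.2).trans (Real.le_coe_toNNReal _)
  have hΦ' : ∀ t ∈ Icc 0 T, Φ t = S t ψ₀ + duhamel S' (forcing u B K Φ) t :=
    fun t ht => hΦ.eq_add_duhamel hΦcont hS'c hS'C hS'S hu hK.continuous ht
  have hY' : ∀ p, ∀ t ∈ Icc 0 T, Y (p + 1) t = S t ψ₀ + duhamel S' (forcing u B K (Y p)) t := by
    intro p t ht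
    rw [hYrec p t ht.1, duhamel_eq_of_eqOn ht.1 (hS'S.mono (Icc_subset_Icc_right ht.2))]
    simp only [duhamel, forcing, map_add, map_smul]
  have hYc : ∀ p, ContinuousOn (Y p) (Icc 0 T) := by
    intro p
    induction p with
    | zero => simpa only [funext hY0] using continuousOn_const
    | succ p ih =>
      exact (((hScont ψ₀).mono Icc_subset_Ici_self).add (continuousOn_duhamel hS'c hS'C
        (integrableOn_forcing hu hK.continuous ih))).congr (hY' p)
  obtain ⟨c, hc⟩ := isCompact_Icc.exists_bound_of_continuousOn hΦcont
  have hL : IntegrableOn (fun s => C * (‖B‖ * |u s| + k)) (Icc 0 T) :=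
    ((hu.abs.const_mul ‖B‖).add (integrableOn_const measure_Icc_lt_top.ne)).const_mul _
  have hbound := le_mul_pow_div_factorial_of_le_integral (e := fun p s => ‖Y p s - Φ s‖) hL
    (fun s => by positivity) (fun _ _ => norm_nonneg _) (fun t ht => by simpa [hY0] using hc t ht)
    fun p t ht => by
      rw [hY' p t ht, hΦ' t ht, add_sub_add_left_eq_sub]
      exact norm_duhamel_forcing_sub_le hS'c hS'C hu hK (hYc p) hΦcont ht
  intro t ht
  simpa [hY0] using hasSum_sub_of_norm_sub_le ((Real.summable_pow_div_factorial _).mul_left c)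
    fun n => (hbound n t ht).trans_eq (mul_div_assoc ..)

/-- the Dyson expansion of the (unique, continuous) mild solution:
`Φᵘ(t)ψ₀ = Σ_{j=0}^∞ Z^j_t ψ₀`, the series converging in `X`, for every `t ∈ [0,T]`. -/
theorem dyson_expansion_of_mildSolution
    (S : ℝ → X →L[ℝ] X)
    (hS0 : S 0 = ContinuousLinearMap.id ℝ X)
    (hSadd : ∀ s t : ℝ, 0 ≤ s → 0 ≤ t → S (s + t) = (S s).comp (S t))
    (hScont : ∀ x : X, ContinuousOn (fun t => S t x) (Ici (0:ℝ)))
    (M ω : ℝ) (hM : 0 < M) (hω : 0 ≤ ω)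
    (hSbound : ∀ t : ℝ, 0 ≤ t → ‖S t‖ ≤ M * Real.exp (ω * t))
    (B : X →L[ℝ] X) (K : X → X) (k : NNReal) (hk : 0 < k) (hK : LipschitzWith k K)
    (T : ℝ) (hT : 0 < T)
    (u : ℝ → ℝ) (hu : IntegrableOn u (Icc (0:ℝ) T))
    (ψ₀ : X)
    -- `Φ` is the unique (continuous) mild solution with initial value `ψ₀` and control `u`
    (Φ : ℝ → X)
    (hΦcont : ContinuousOn Φ (Icc (0:ℝ) T))
    (hΦ : IsMildSolution S B K u ψ₀ T Φ)
    -- the Picard/Dyson iterates `Y p t = Y^p_t ψ₀`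
    (Y : ℕ → ℝ → X)
    (hY0 : ∀ t : ℝ, Y 0 t = 0)
    (hYrec : ∀ p : ℕ, ∀ t : ℝ, 0 ≤ t →
      Y (p + 1) t = S t ψ₀ + ∫ s in (0:ℝ)..t,
        (u s • S (t - s) (B (Y p s)) + S (t - s) (K (Y p s)))) :
    ∀ t ∈ Icc (0:ℝ) T, HasSum (fun j : ℕ => Y (j + 1) t - Y j t) (Φ t) :=
  dyson_expansion_of_mildSolution_general S hScont M ω hM hω hSbound B K k hK T hT u hu ψ₀ Φ hΦcont
    hΦ Y hY0 hYrec
end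

section
/- Assume K : 𝒳 → 𝒳 is merely continuous (not necessarily Lipschitz). For every j ∈ ℕ, every T ≥ 0, every L ≥ 0 and every ψ₀ ∈ 𝒳, the set 𝒴_j^{T,L} = { Y^j_t ψ₀ : 0 ≤ t ≤ T, u ∈ L¹([0,T];ℝ) with ‖u‖_{L¹([0,T])} ≤ L } is relatively compact in 𝒳. -/
/-!
By induction on `j` every iterate takes values, over all admissible `t` and `u`, in a compact
set `C`. The constant term `t ↦ T_t ψ₀` has compact range on `[0, T]`, and strong continuity
plus the uniform boundedness principle make `(r, x) ↦ T_r x` jointly continuous on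
`[0, T] × 𝒳`, so `A = {T_r B x}` and `A' = {T_r K(x)}` (`r ∈ [0, T]`, `x ∈ C`) are compact.
The integrand `u(s) a(s) + b(s)`, with `a(s) ∈ A` and `b(s) ∈ A'`, is `|u(s)| + 1` times a
point of the convex hull of `A ∪ -A ∪ A'`. Averaging against the weight `|u| + 1`, whose mass
is at most `L + T`, puts the integral in `(L + T) • 𝒦`, where `𝒦` is the closed convex hull of
`A ∪ -A ∪ A' ∪ {0}`, compact by completeness of `𝒳`. Nothing makes the integrand measurable,
so its integral may be the junk value `0`; hence `0 ∈ 𝒦`.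
-/

open MeasureTheory Set Pointwise

theorem isCompact_closedConvexHull {E : Type*} [NormedAddCommGroup E] [NormedSpace ℝ E]
    [CompleteSpace E] {s : Set E} (hs : IsCompact s) : IsCompact (closedConvexHull ℝ s) := by
  rw [closedConvexHull_eq_closure_convexHull]
  exact (totallyBounded_convexHull.2 hs.totallyBounded).closure.isCompact_of_isClosed
    isClosed_closure

theorem StarConvex.smul_mem_smul_of_le {E : Type*} [AddCommGroup E] [Module ℝ E] {s : Set E}
    (hs : StarConvex ℝ 0 s) {x : E} (hx : x ∈ s) {c r : ℝ} (hc : 0 ≤ c) (hcr : c ≤ r) :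
    c • x ∈ r • s := by
  rcases hcr.lt_or_eq with hcr | rfl
  · have hr : 0 < r := hc.trans_lt hcr
    refine ⟨(c / r) • x, hs.smul_mem hx (div_nonneg hc hr.le) ((div_le_one hr).2 hcr.le), ?_⟩
    simp only [smul_smul, mul_div_cancel₀ c hr.ne']
  · exact smul_mem_smul_set hx

theorem smul_add_mem_smul_convexHull {E : Type*} [AddCommGroup E] [Module ℝ E] {A B : Set E}
    {a b : E} (ha : a ∈ A) (hb : b ∈ B) (c : ℝ) :
    c • a + b ∈ (|c| + 1) • convexHull ℝ (A ∪ -A ∪ B) := by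
  obtain ⟨x, hx, hcx⟩ : ∃ x ∈ A ∪ -A, c • a = |c| • x := by
    rcases le_or_gt 0 c with hc | hc
    · exact ⟨a, .inl ha, by rw [abs_of_nonneg hc]⟩
    · exact ⟨-a, .inr (by simpa using ha), by rw [abs_of_neg hc, neg_smul_neg]⟩
  rw [hcx, (convex_convexHull ℝ _).add_smul (abs_nonneg c) zero_le_one]
  exact add_mem_add
    (smul_mem_smul_set (subset_convexHull ℝ _ (.inl hx)))
    (by simpa using subset_convexHull ℝ _ (.inr hb))

theorem ContinuousLinearMap.continuousOn_uncurry_of_isCompact {α 𝕜 E F : Type*}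
    [TopologicalSpace α] [NontriviallyNormedField 𝕜] [NormedAddCommGroup E] [NormedSpace 𝕜 E]
    [CompleteSpace E] [NormedAddCommGroup F] [NormedSpace 𝕜 F] (S : α → E →L[𝕜] F) {s : Set α}
    (hs : IsCompact s) (hS : ∀ x, ContinuousOn (fun t => S t x) s) :
    ContinuousOn (fun p : α × E => S p.1 p.2) (s ×ˢ univ) := by
  -- Banach–Steinhaus: the operators `S t`, `t ∈ s`, share a Lipschitz constant.
  obtain ⟨C, hC⟩ := banach_steinhaus (g := fun t : s => S t) fun x =>
    let ⟨C, hC⟩ := hs.exists_bound_of_continuousOn (hS x)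
    ⟨C, fun t => hC t t.2⟩
  refine continuousOn_prod_of_continuousOn_lipschitzOnWith' _ C.toNNReal
    (fun t ht => ((S t).lipschitz.weaken ?_).lipschitzOnWith) (fun x _ => hS x)
  exact norm_toNNReal.symm.trans_le (Real.toNNReal_le_toNNReal (hC ⟨t, ht⟩))

/-- The integral of `f` is the integral of `f / w` against the finite measure `w • μ` of mass
`∫ w ≤ R`, i.e. that mass times an average of `f / w`, which lies in `K`. -/
theorem integral_mem_smul_of_ae_mem_smul {α E : Type*} [MeasurableSpace α] {μ : Measure α}
    [NormedAddCommGroup E] [NormedSpace ℝ E] [CompleteSpace E] {K : Set E} (hKconv : Convex ℝ K)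
    (hKclosed : IsClosed K) (hK0 : 0 ∈ K) {w : α → ℝ} (hw : Integrable w μ)
    (hw_pos : ∀ᵐ a ∂μ, 0 < w a) {f : α → E} (hf : ∀ᵐ a ∂μ, f a ∈ w a • K) {R : ℝ}
    (hR : ∫ a, w a ∂μ ≤ R) : ∫ a, f a ∂μ ∈ R • K := by
  have h0 : (0 : E) ∈ R • K := ⟨0, hK0, smul_zero R⟩
  by_cases hfi : Integrable f μ
  swap
  · rwa [integral_undef hfi]
  set ν := μ.withDensity fun a => ENNReal.ofReal (w a)
  set g : α → E := fun a => (w a)⁻¹ • f a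
  have hd : AEMeasurable (fun a => ENNReal.ofReal (w a)) μ := hw.aemeasurable.ennreal_ofReal
  have hd_fin : ∀ᵐ a ∂μ, ENNReal.ofReal (w a) < ⊤ := ae_of_all _ fun _ => ENNReal.ofReal_lt_top
  have hfg : (fun a => (ENNReal.ofReal (w a)).toReal • g a) =ᵐ[μ] f := by
    filter_upwards [hw_pos] with a ha
    simp only [g, ENNReal.toReal_ofReal ha.le, smul_inv_smul₀ ha.ne']
  have hg : Integrable g ν :=
    (integrable_withDensity_iff_integrable_smul₀' hd hd_fin).2 (hfi.congr hfg.symm)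
  have hgK : ∀ᵐ a ∂ν, g a ∈ K := withDensity_absolutelyContinuous _ _ <| by
    filter_upwards [hw_pos, hf] with a ha hfa
    exact (mem_smul_set_iff_inv_smul_mem₀ ha.ne' _ _).1 hfa
  have hw_ae_nonneg : 0 ≤ᵐ[μ] w := hw_pos.mono fun _ h => h.le
  have hw_nonneg : 0 ≤ ∫ a, w a ∂μ := integral_nonneg_of_ae hw_ae_nonneg
  have hmass : ν.real univ = ∫ a, w a ∂μ := by
    rw [measureReal_def, withDensity_apply _ MeasurableSet.univ, Measure.restrict_univ,
      ← ofReal_integral_eq_lintegral_ofReal hw hw_ae_nonneg, ENNReal.toReal_ofReal hw_nonneg]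
  have : IsFiniteMeasure ν := isFiniteMeasure_withDensity_ofReal hw.2
  have hint : ∫ a, f a ∂μ = ∫ a, g a ∂ν := by
    rw [← integral_congr_ae hfg, integral_withDensity_eq_integral_toReal_smul₀ hd hd_fin]
  rw [hint]
  rcases eq_zero_or_neZero ν with hν | hν
  · rwa [hν, integral_zero_measure]
  rw [← smul_inv_smul₀ (measureReal_univ_ne_zero (μ := ν)) (∫ a, g a ∂ν), ← average_eq, hmass]
  exact (hKconv.starConvex hK0).smul_mem_smul_of_le (hKconv.average_mem hKclosed hgK hg)
    hw_nonneg hR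

theorem intervalIntegral_smul_add_mem_smul_closedConvexHull {E : Type*} [NormedAddCommGroup E]
    [NormedSpace ℝ E] [CompleteSpace E] {A B : Set E} {u : ℝ → ℝ} {a b : ℝ → E} {t R : ℝ}
    (ht : 0 ≤ t) (hu : IntegrableOn u (Ioc 0 t)) (hR : (∫ s in Ioc 0 t, |u s|) + t ≤ R)
    (ha : ∀ s ∈ Ioc 0 t, a s ∈ A) (hb : ∀ s ∈ Ioc 0 t, b s ∈ B) :
    ∫ s in (0 : ℝ)..t, (u s • a s + b s) ∈ R • closedConvexHull ℝ (insert 0 (A ∪ -A ∪ B)) := by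
  have hone : IntegrableOn (fun _ => (1 : ℝ)) (Ioc 0 t) := integrableOn_const measure_Ioc_lt_top.ne
  rw [intervalIntegral.integral_of_le ht]
  refine integral_mem_smul_of_ae_mem_smul (w := fun s => |u s| + 1) convex_closedConvexHull
    isClosed_closedConvexHull (subset_closedConvexHull (mem_insert 0 _)) (hu.abs.add hone)
    (ae_of_all _ fun s => by positivity) ?_ ?_
  · refine ae_restrict_of_forall_mem measurableSet_Ioc fun s hs => ?_
    refine smul_set_mono ?_ (smul_add_mem_smul_convexHull (ha s hs) (hb s hs) (u s))
    exact (convexHull_mono (subset_insert _ _)).trans convexHull_subset_closedConvexHull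
  · rwa [integral_add hu.abs hone, setIntegral_const, measureReal_def, Real.volume_Ioc,
      ENNReal.toReal_ofReal (by linarith), sub_zero, smul_eq_mul, mul_one]

section Picard

variable {X : Type*} [NormedAddCommGroup X] [NormedSpace ℝ X] [CompleteSpace X]
  (S : ℝ → X →L[ℝ] X) (hScont : ∀ x : X, ContinuousOn (fun t => S t x) (Ici (0:ℝ)))
  (B : X →L[ℝ] X) {K : X → X} (hK : Continuous K)
include hScont hK

theorem exists_isCompact_duhamel_integral_mem {C : Set X} (hC : IsCompact C) (T L : ℝ) :
    ∃ Q : Set X, IsCompact Q ∧ ∀ t ∈ Icc (0:ℝ) T, ∀ (u : ℝ → ℝ) (y : ℝ → X),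
      IntegrableOn u (Ioc 0 t) → (∫ s in Ioc 0 t, |u s|) ≤ L → (∀ s ∈ Ioc 0 t, y s ∈ C) →
      ∫ s in (0:ℝ)..t, (u s • S (t - s) (B (y s)) + S (t - s) (K (y s))) ∈ Q := by
  have hjoint := ContinuousLinearMap.continuousOn_uncurry_of_isCompact S (s := Icc 0 T)
    isCompact_Icc fun x => (hScont x).mono Icc_subset_Ici_self
  have himage (F : X → X) (hF : Continuous F) :
      IsCompact ((fun q : ℝ × X => S q.1 (F q.2)) '' (Icc 0 T ×ˢ C)) :=
    (isCompact_Icc.prod hC).image_of_continuousOn <|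
      hjoint.comp (continuous_fst.prodMk (hF.comp continuous_snd)).continuousOn
        fun q hq => ⟨hq.1, mem_univ _⟩
  have hA := himage B B.continuous
  have hA' := himage K hK
  refine ⟨(L + T) • closedConvexHull ℝ (insert 0 (_ ∪ -_ ∪ _)),
    (isCompact_closedConvexHull (((hA.union hA.neg).union hA').insert 0)).smul (L + T), ?_⟩
  intro t ht u y hu huL hy
  have hmem (s) (hs : s ∈ Ioc 0 t) : (t - s, y s) ∈ Icc 0 T ×ˢ C :=
    ⟨⟨by linarith [hs.2], by linarith [hs.1, ht.2]⟩, hy s hs⟩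
  exact intervalIntegral_smul_add_mem_smul_closedConvexHull ht.1 hu (by linarith [ht.2])
    (fun s hs => mem_image_of_mem _ (hmem s hs)) (fun s hs => mem_image_of_mem _ (hmem s hs))

theorem exists_isCompact_picard_iterate_mem (ψ₀ : X) (Y : (ℝ → ℝ) → ℕ → ℝ → X)
    (hY0 : ∀ u t, Y u 0 t = 0)
    (hYrec : ∀ u p t, 0 ≤ t → Y u (p + 1) t = S t ψ₀ + ∫ s in (0:ℝ)..t,
      (u s • S (t - s) (B (Y u p s)) + S (t - s) (K (Y u p s))))
    (T L : ℝ) (p : ℕ) :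
    ∃ C : Set X, IsCompact C ∧ ∀ u : ℝ → ℝ, IntegrableOn u (Icc 0 T) →
      (∫ s in (0:ℝ)..T, |u s|) ≤ L → ∀ t ∈ Icc (0:ℝ) T, Y u p t ∈ C := by
  induction p with
  | zero => exact ⟨{0}, isCompact_singleton, fun u _ _ t _ => hY0 u t⟩
  | succ p ih =>
    obtain ⟨C, hC, hYC⟩ := ih
    obtain ⟨Q, hQ, hIQ⟩ := exists_isCompact_duhamel_integral_mem S hScont B hK hC T L
    refine ⟨(fun t => S t ψ₀) '' Icc 0 T + Q,
      (isCompact_Icc.image_of_continuousOn ((hScont ψ₀).mono Icc_subset_Ici_self)).add hQ, ?_⟩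
    intro u hu huL t ht
    have hsub : Ioc 0 t ⊆ Icc 0 T := fun s hs => ⟨hs.1.le, hs.2.trans ht.2⟩
    have huL' : (∫ s in Ioc 0 t, |u s|) ≤ L := by
      refine le_trans ?_ ((intervalIntegral.integral_of_le (ht.1.trans ht.2)).symm.trans_le huL)
      exact setIntegral_mono_set (hu.mono_set Ioc_subset_Icc_self).abs
        (ae_of_all _ fun s => abs_nonneg (u s)) (Ioc_subset_Ioc_right ht.2).eventuallyLE
    rw [hYrec u p t ht.1]
    exact add_mem_add (mem_image_of_mem _ ht)
      (hIQ t ht u _ (hu.mono_set hsub) huL' fun s hs => hYC u hu huL s (hsub hs))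

end Picard

theorem picard_iterate_set_relatively_compact_general
    {X : Type*} [NormedAddCommGroup X] [NormedSpace ℝ X] [CompleteSpace X]
    (S : ℝ → X →L[ℝ] X)
    (hScont : ∀ x : X, ContinuousOn (fun t => S t x) (Ici (0:ℝ)))
    (B : X →L[ℝ] X) (K : X → X) (hK : Continuous K)
    (ψ₀ : X)
    -- the Picard/Dyson iterates `Y u p t = Y^p_t ψ₀` for the control `u`
    (Y : (ℝ → ℝ) → ℕ → ℝ → X)
    (hY0 : ∀ u : ℝ → ℝ, ∀ t : ℝ, Y u 0 t = 0)
    (hYrec : ∀ u : ℝ → ℝ, ∀ p : ℕ, ∀ t : ℝ, 0 ≤ t →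
      Y u (p + 1) t = S t ψ₀ + ∫ s in (0:ℝ)..t,
        (u s • S (t - s) (B (Y u p s)) + S (t - s) (K (Y u p s))))
    (j : ℕ) (T L : ℝ) :
    IsCompact (closure { x : X | ∃ t ∈ Icc (0:ℝ) T, ∃ u : ℝ → ℝ,
      IntegrableOn u (Icc (0:ℝ) T) ∧ (∫ s in (0:ℝ)..T, |u s|) ≤ L ∧ x = Y u j t }) := by
  obtain ⟨C, hC, hYC⟩ :=
    exists_isCompact_picard_iterate_mem S hScont B hK ψ₀ Y hY0 hYrec T L j
  refine hC.of_isClosed_subset isClosed_closure (closure_minimal ?_ hC.isClosed)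
  rintro _ ⟨t, ht, u, hu, huL, rfl⟩
  exact hYC u hu huL t ht

/-- with `K` merely continuous, for every `j ∈ ℕ`, `T ≥ 0`, `L ≥ 0` and
`ψ₀ ∈ X`, the set `𝒴_j^{T,L} = { Y^j_t ψ₀ : 0 ≤ t ≤ T, ‖u‖_{L¹([0,T])} ≤ L }` is
relatively compact in `X`. -/
theorem picard_iterate_set_relatively_compact
    {X : Type*} [NormedAddCommGroup X] [NormedSpace ℝ X] [CompleteSpace X]
    (S : ℝ → X →L[ℝ] X)
    (hS0 : S 0 = ContinuousLinearMap.id ℝ X)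
    (hSadd : ∀ s t : ℝ, 0 ≤ s → 0 ≤ t → S (s + t) = (S s).comp (S t))
    (hScont : ∀ x : X, ContinuousOn (fun t => S t x) (Ici (0:ℝ)))
    (M ω : ℝ) (hM : 0 < M) (hω : 0 ≤ ω)
    (hSbound : ∀ t : ℝ, 0 ≤ t → ‖S t‖ ≤ M * Real.exp (ω * t))
    (B : X →L[ℝ] X) (K : X → X) (hK : Continuous K)
    (ψ₀ : X)
    -- the Picard/Dyson iterates `Y u p t = Y^p_t ψ₀` for the control `u`
    (Y : (ℝ → ℝ) → ℕ → ℝ → X)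
    (hY0 : ∀ u : ℝ → ℝ, ∀ t : ℝ, Y u 0 t = 0)
    (hYrec : ∀ u : ℝ → ℝ, ∀ p : ℕ, ∀ t : ℝ, 0 ≤ t →
      Y u (p + 1) t = S t ψ₀ + ∫ s in (0:ℝ)..t,
        (u s • S (t - s) (B (Y u p s)) + S (t - s) (K (Y u p s))))
    (j : ℕ) (T L : ℝ) (hT : 0 ≤ T) (hL : 0 ≤ L) :
    IsCompact (closure { x : X | ∃ t ∈ Icc (0:ℝ) T, ∃ u : ℝ → ℝ,
      IntegrableOn u (Icc (0:ℝ) T) ∧ (∫ s in (0:ℝ)..T, |u s|) ≤ L ∧ x = Y u j t }) :=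
  picard_iterate_set_relatively_compact_general S hScont B K hK ψ₀ Y hY0 hYrec j T L
end

section
/- Let T > 0, u ∈ L¹([0,T];ℝ) and ψ₀ ∈ 𝒳. Every essentially bounded strongly measurable function ψ : [0,T] → 𝒳 that satisfies the Duhamel formula ψ(t) = T_t ψ₀ + ∫₀ᵗ u(s) T_{t−s} B ψ(s) ds + ∫₀ᵗ T_{t−s} K(ψ(s)) ds for every t ∈ [0,T] is continuous on [0,T]. -/
/-!
The Duhamel formula writes `ψ` as `t ↦ S t ψ₀` plus two convolutions `∫₀ᵗ S (t - s) (g s) ds`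
with `g = u • B ∘ ψ` and `g = K ∘ ψ`, both integrable on `[0, T]` because `ψ` is essentially
bounded. By Banach–Steinhaus the strongly continuous family `S` is norm-bounded on `[0, T]`, so
extending it constantly outside `[0, T]` gives a bounded strongly continuous family on `ℝ`. For
such a family the convolution with an integrable `g` is continuous by dominated convergence.
-/

open MeasureTheory Set Filter Topology

section OperatorFamilies

variable {𝕜 α E F : Type*} [NontriviallyNormedField 𝕜] [TopologicalSpace α]
  [NormedAddCommGroup E] [NormedSpace 𝕜 E] [NormedAddCommGroup F] [NormedSpace 𝕜 F]
  {Φ : α → E →L[𝕜] F}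

theorem continuous_uncurry_apply_of_norm_le_s14 (hΦ : ∀ x, Continuous fun a => Φ a x) {C : ℝ}
    (hC : ∀ a, ‖Φ a‖ ≤ C) : Continuous fun p : α × E => Φ p.1 p.2 := by
  refine continuous_iff_continuousAt.2 fun ⟨a₀, x₀⟩ => ?_
  have hsmall : Tendsto (fun p : α × E => Φ p.1 (p.2 - x₀)) (𝓝 (a₀, x₀)) (𝓝 0) := by
    refine squeeze_zero_norm (fun p => ((Φ p.1).le_opNorm _).trans
      (mul_le_mul_of_nonneg_right (hC _) (norm_nonneg _))) ?_
    simpa using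
      ((continuous_snd.sub (continuous_const (y := x₀))).norm.const_mul C).tendsto (a₀, x₀)
  have hfix : Tendsto (fun p : α × E => Φ p.1 x₀) (𝓝 (a₀, x₀)) (𝓝 (Φ a₀ x₀)) :=
    ((hΦ x₀).comp continuous_fst).tendsto _
  simpa [ContinuousAt, ← map_add] using hsmall.add hfix

theorem IsCompact.exists_norm_le_of_continuousOn_apply [CompleteSpace E] {s : Set α}
    (hs : IsCompact s) (hΦ : ∀ x, ContinuousOn (fun a => Φ a x) s) :
    ∃ C, ∀ a ∈ s, ‖Φ a‖ ≤ C := by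
  obtain ⟨C, hC⟩ := banach_steinhaus (g := fun a : s => Φ a) fun x => by
    obtain ⟨C, hC⟩ := hs.exists_bound_of_continuousOn (hΦ x)
    exact ⟨C, fun a => hC a a.2⟩
  exact ⟨C, fun a ha => hC ⟨a, ha⟩⟩

theorem exists_continuous_apply_extension [CompleteSpace E] {S : ℝ → E →L[𝕜] F} {a b : ℝ}
    (hab : a ≤ b) (hS : ∀ x, ContinuousOn (fun t => S t x) (Icc a b)) :
    ∃ Φ : ℝ → E →L[𝕜] F,
      (∀ x, Continuous fun r => Φ r x) ∧ (∃ C, ∀ r, ‖Φ r‖ ≤ C) ∧ EqOn Φ S (Icc a b) := by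
  obtain ⟨C, hC⟩ := isCompact_Icc.exists_norm_le_of_continuousOn_apply hS
  refine ⟨fun r => S (projIcc a b hab r), fun x => ?_, ⟨C, fun r => hC _ (projIcc a b hab r).2⟩,
    fun t ht => by simp [projIcc_of_mem hab ht]⟩
  exact (hS x).comp_continuous (continuous_subtype_val.comp continuous_projIcc) fun r =>
    (projIcc a b hab r).2

end OperatorFamilies

section Convolution

variable {E F : Type*} [NormedAddCommGroup E] [NormedSpace ℝ E] [NormedAddCommGroup F]
  [NormedSpace ℝ F]

theorem continuousOn_intervalIntegral_apply_sub {Φ : ℝ → E →L[ℝ] F}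
    (hΦ : ∀ x, Continuous fun r => Φ r x) {C : ℝ} (hC : ∀ r, ‖Φ r‖ ≤ C) {g : ℝ → E} {T : ℝ}
    (hg : IntervalIntegrable g volume 0 T) :
    ContinuousOn (fun t => ∫ s in (0:ℝ)..t, Φ (t - s) (g s)) (Icc 0 T) := by
  -- Truncating at `s ≤ t` moves the variable endpoint into the integrand.
  set G : ℝ → ℝ → F := fun t => {s | s ≤ t}.indicator fun s => Φ (t - s) (g s)
  have hG : EqOn (fun t => ∫ s in (0:ℝ)..t, Φ (t - s) (g s)) (fun t => ∫ s in (0:ℝ)..T, G t s)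
      (Icc 0 T) := fun t ht => (intervalIntegral.integral_indicator ht).symm
  refine ContinuousOn.congr (fun t₀ _ => ?_) hG
  have hjoint := continuous_uncurry_apply_of_norm_le_s14 hΦ hC
  refine intervalIntegral.continuousWithinAt_of_dominated_interval (bound := fun s => C * ‖g s‖)
    (Eventually.of_forall fun t => ?_) (Eventually.of_forall fun t => ae_of_all _ fun s _ => ?_)
    (hg.norm.const_mul C) ?_
  · exact (hjoint.comp_aestronglyMeasurable
      ((continuous_const.sub continuous_id).aestronglyMeasurable.prodMk
        hg.def'.aestronglyMeasurable)).indicator measurableSet_Iic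
  · exact (norm_indicator_le_norm_self _ s).trans
      (((Φ _).le_opNorm _).trans (mul_le_mul_of_nonneg_right (hC _) (norm_nonneg _)))
  · filter_upwards [measure_singleton (μ := volume) t₀ |> measure_eq_zero_iff_ae_notMem.1]
      with s (hs : s ≠ t₀) _
    refine ContinuousAt.continuousWithinAt ?_
    rcases hs.lt_or_gt with hlt | hgt
    · have hcont : Continuous fun t => Φ (t - s) (g s) :=
        hjoint.comp ((continuous_id.sub continuous_const).prodMk continuous_const)
      refine hcont.continuousAt.congr ?_
      filter_upwards [eventually_gt_nhds hlt] with t ht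
      simp [G, indicator_of_mem (show s ∈ {s | s ≤ t} from ht.le)]
    · refine (continuousAt_const (y := (0 : F))).congr ?_
      filter_upwards [eventually_lt_nhds hgt] with t ht
      simp [G, indicator_of_notMem (show s ∉ {s | s ≤ t} from not_le.2 ht)]

end Convolution

theorem LipschitzWith.integrable_comp_of_bound {α E F : Type*} [MeasurableSpace α]
    {μ : Measure α} [IsFiniteMeasure μ] [NormedAddCommGroup E] [NormedAddCommGroup F]
    {K : E → F} {k : NNReal} (hK : LipschitzWith k K) {ψ : α → E}
    (hψ : AEStronglyMeasurable ψ μ) {C : ℝ} (hC : ∀ᵐ a ∂μ, ‖ψ a‖ ≤ C) :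
    Integrable (fun a => K (ψ a)) μ := by
  refine Integrable.of_bound (hK.continuous.comp_aestronglyMeasurable hψ) (‖K 0‖ + k * C) <|
    hC.mono fun a ha => ?_
  calc ‖K (ψ a)‖ ≤ ‖K 0‖ + ‖K (ψ a) - K 0‖ := norm_le_norm_add_norm_sub' _ _
    _ ≤ ‖K 0‖ + k * ‖ψ a‖ := by
      gcongr; simpa [dist_eq_norm] using hK.dist_le_mul (ψ a) 0
    _ ≤ ‖K 0‖ + k * C := by gcongr

theorem mildSolution_continuous_general
    {X : Type*} [NormedAddCommGroup X] [NormedSpace ℝ X] [CompleteSpace X]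
    (S : ℝ → X →L[ℝ] X)
    (hScont : ∀ x : X, ContinuousOn (fun t => S t x) (Ici (0:ℝ)))
    (B : X →L[ℝ] X) (K : X → X) (k : NNReal) (hK : LipschitzWith k K)
    (T : ℝ)
    (u : ℝ → ℝ) (hu : IntegrableOn u (Icc (0:ℝ) T))
    (ψ₀ : X) (ψ : ℝ → X)
    -- `ψ` is strongly measurable and essentially bounded on `[0, T]`
    (hmeas : AEStronglyMeasurable ψ (volume.restrict (Icc (0:ℝ) T)))
    (hbdd : ∃ Cb : ℝ, ∀ᵐ s ∂(volume.restrict (Icc (0:ℝ) T)), ‖ψ s‖ ≤ Cb)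
    -- `ψ` satisfies the Duhamel formula on `[0, T]`
    (hψ : ∀ t ∈ Icc (0:ℝ) T,
      ψ t = S t ψ₀ + (∫ s in (0:ℝ)..t, u s • S (t - s) (B (ψ s)))
          + (∫ s in (0:ℝ)..t, S (t - s) (K (ψ s)))) :
    ContinuousOn ψ (Icc (0:ℝ) T) := by
  rcases lt_or_ge T 0 with hT | hT
  · simp [Icc_eq_empty_of_lt hT]
  obtain ⟨Φ, hΦ, ⟨C, hC⟩, hΦS⟩ :=
    exists_continuous_apply_extension hT fun x => (hScont x).mono fun t ht => ht.1
  obtain ⟨Cb, hCb⟩ := hbdd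
  have hBψ : IntervalIntegrable (fun s => u s • B (ψ s)) volume 0 T :=
    (intervalIntegrable_iff_integrableOn_Icc_of_le hT).2 <|
      hu.smul_bdd (‖B‖ * Cb) (B.continuous.comp_aestronglyMeasurable hmeas) <|
        hCb.mono fun s hs => (B.le_opNorm _).trans (by gcongr)
  have hKψ : IntervalIntegrable (fun s => K (ψ s)) volume 0 T :=
    (intervalIntegrable_iff_integrableOn_Icc_of_le hT).2 (hK.integrable_comp_of_bound hmeas hCb)
  have hduhamel : EqOn ψ (fun t => S t ψ₀ + (∫ s in (0:ℝ)..t, Φ (t - s) (u s • B (ψ s)))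
      + ∫ s in (0:ℝ)..t, Φ (t - s) (K (ψ s))) (Icc 0 T) := by
    intro t ht
    have hΦ_eq : ∀ s ∈ uIcc 0 t, Φ (t - s) = S (t - s) := fun s hs => by
      rw [uIcc_of_le ht.1] at hs
      exact hΦS ⟨by linarith [hs.2], by linarith [hs.1, ht.2]⟩
    rw [hψ t ht]
    refine congr_arg₂ (· + ·) (congr_arg₂ (· + ·) rfl ?_) ?_ <;>
      exact intervalIntegral.integral_congr fun s hs => by simp [hΦ_eq s hs]
  refine ContinuousOn.congr ?_ hduhamel
  exact (((hScont ψ₀).mono fun t ht => ht.1).add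
    (continuousOn_intervalIntegral_apply_sub hΦ hC hBψ)).add
    (continuousOn_intervalIntegral_apply_sub hΦ hC hKψ)

/-- every essentially bounded, strongly measurable function
`ψ : [0,T] → X` satisfying the Duhamel formula
`ψ(t) = S_t ψ₀ + ∫₀ᵗ u(s) S_{t-s} B ψ(s) ds + ∫₀ᵗ S_{t-s} K(ψ(s)) ds` for every
`t ∈ [0,T]` is continuous on `[0,T]`. -/
theorem mildSolution_continuous
    {X : Type*} [NormedAddCommGroup X] [NormedSpace ℝ X] [CompleteSpace X]
    (S : ℝ → X →L[ℝ] X)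
    (hS0 : S 0 = ContinuousLinearMap.id ℝ X)
    (hSadd : ∀ s t : ℝ, 0 ≤ s → 0 ≤ t → S (s + t) = (S s).comp (S t))
    (hScont : ∀ x : X, ContinuousOn (fun t => S t x) (Ici (0:ℝ)))
    (M ω : ℝ) (hM : 0 < M) (hω : 0 ≤ ω)
    (hSbound : ∀ t : ℝ, 0 ≤ t → ‖S t‖ ≤ M * Real.exp (ω * t))
    (B : X →L[ℝ] X) (K : X → X) (k : NNReal) (hk : 0 < k) (hK : LipschitzWith k K)
    (T : ℝ) (hT : 0 < T)
    (u : ℝ → ℝ) (hu : IntegrableOn u (Icc (0:ℝ) T))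
    (ψ₀ : X) (ψ : ℝ → X)
    -- `ψ` is strongly measurable and essentially bounded on `[0, T]`
    (hmeas : AEStronglyMeasurable ψ (volume.restrict (Icc (0:ℝ) T)))
    (hbdd : ∃ Cb : ℝ, ∀ᵐ s ∂(volume.restrict (Icc (0:ℝ) T)), ‖ψ s‖ ≤ Cb)
    -- `ψ` satisfies the Duhamel formula on `[0, T]`
    (hψ : ∀ t ∈ Icc (0:ℝ) T,
      ψ t = S t ψ₀ + (∫ s in (0:ℝ)..t, u s • S (t - s) (B (ψ s)))
          + (∫ s in (0:ℝ)..t, S (t - s) (K (ψ s)))) :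
    ContinuousOn ψ (Icc (0:ℝ) T) :=
  mildSolution_continuous_general S hScont B K k hK T u hu ψ₀ ψ hmeas hbdd hψ
end
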